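/- arXiv:2302.12404 — 2 statements merged into one kernel-verified Lean document; each statement's English description precedes it below -/
import Mathlib

section
/- Let X, Y be Tychonoff spaces, φ : 𝒰_X → 𝒰_Y an order-isomorphism, and f : X → Y the φ-induced function (defined by φ(C_x(X)) = C_{f(x)}(Y) for each x ∈ X). Then f is a bijection, and f⁻¹ is the φ⁻¹-induced function. -/
open Set TopologicalSpace

/-- The basic set `V(f,A,ε)` of functions uniformly `ε`-close to `f` on `A`. -/
def Vset {X : Type*} [TopologicalSpace X] (f : C(X, ℝ)) (A : Set X) (ε : ℝ) : Set C(X, ℝ) :=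
  {g | ∀ x ∈ A, |f x - g x| < ε}

/-- A nonempty directed family of subsets of `X`. -/
structure DirFam (X : Type*) where
  sets : Set (Set X)
  nonempty : sets.Nonempty
  directed : ∀ A ∈ sets, ∀ B ∈ sets, ∃ E ∈ sets, A ∪ B ⊆ E

/-- The uniform topology `C_γ` on `C(X)` determined by a directed family `γ`. -/
def DirFam.top {X : Type*} [TopologicalSpace X] (γ : DirFam X) : TopologicalSpace C(X, ℝ) where
  IsOpen U := ∀ f ∈ U, ∃ A ∈ γ.sets, ∃ ε > 0, Vset f A ε ⊆ U
  isOpen_univ := by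
    intro f _
    obtain ⟨A, hA⟩ := γ.nonempty
    exact ⟨A, hA, 1, one_pos, Set.subset_univ _⟩
  isOpen_inter := by
    intro U W hU hW f hf
    obtain ⟨A, hA, ε, hε, hAU⟩ := hU f hf.1
    obtain ⟨B, hB, δ, hδ, hBW⟩ := hW f hf.2
    obtain ⟨E, hE, hsub⟩ := γ.directed A hA B hB
    refine ⟨E, hE, min ε δ, lt_min hε hδ, fun g hg => ⟨?_, ?_⟩⟩
    · exact hAU fun x hx =>
        lt_of_lt_of_le (hg x (hsub (Set.mem_union_left _ hx))) (min_le_left _ _)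
    · exact hBW fun x hx =>
        lt_of_lt_of_le (hg x (hsub (Set.mem_union_right _ hx))) (min_le_right _ _)
  isOpen_sUnion := by
    intro S hS f hf
    obtain ⟨U, hU, hfU⟩ := hf
    obtain ⟨A, hA, ε, hε, h⟩ := hS U hU f hfU
    exact ⟨A, hA, ε, hε, h.trans (Set.subset_sUnion_of_mem hU)⟩

/-- The lattice of uniform topologies on `C(X)`. -/
def UX (X : Type*) [TopologicalSpace X] : Set (TopologicalSpace C(X, ℝ)) :=
  {t | ∃ γ : DirFam X, t = γ.top}

/-- `tle s t` means the topology `s` is coarser than or equal to `t`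
(inclusion of topologies, `τ_s ⊆ τ_t`). -/
def tle {X : Type*} [TopologicalSpace X] (s t : TopologicalSpace C(X, ℝ)) : Prop :=
  ∀ U : Set C(X, ℝ), s.IsOpen U → t.IsOpen U

/-- The directed family `{∅}`, generating the indiscrete topology `C_∅`. -/
def cEmptyFam (X : Type*) : DirFam X :=
  ⟨{∅}, Set.singleton_nonempty _, by
    intro A hA B hB
    rw [Set.mem_singleton_iff] at hA hB
    exact ⟨∅, Set.mem_singleton _, by simp [hA, hB]⟩⟩

/-- The directed family `{X}`, generating the uniform-convergence topology `C_u`. -/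
def cUnivFam (X : Type*) : DirFam X :=
  ⟨{Set.univ}, Set.singleton_nonempty _, fun A _ B _ =>
    ⟨Set.univ, Set.mem_singleton _, Set.subset_univ _⟩⟩

/-- The directed family `{{x}}`. -/
def ptFam {X : Type*} (x : X) : DirFam X :=
  ⟨{{x}}, Set.singleton_nonempty _, by
    intro A hA B hB
    rw [Set.mem_singleton_iff] at hA hB
    exact ⟨{x}, Set.mem_singleton _, by simp [hA, hB]⟩⟩

/-- The directed family `{A}`. -/
def setFam {X : Type*} (A : Set X) : DirFam X :=
  ⟨{A}, Set.singleton_nonempty _, by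
    intro B hB E hE
    rw [Set.mem_singleton_iff] at hB hE
    exact ⟨A, Set.mem_singleton _, by simp [hB, hE]⟩⟩

/-- The topology `C_x`. -/
def Cpt {X : Type*} [TopologicalSpace X] (x : X) : TopologicalSpace C(X, ℝ) :=
  (ptFam x).top

/-- The topology `C_A`. -/
def CSet {X : Type*} [TopologicalSpace X] (A : Set X) : TopologicalSpace C(X, ℝ) :=
  (setFam A).top

/-- The pushforward `f*γ = {f[A] : A ∈ γ}` of a directed family along a map. -/
def DirFam.push {X Y : Type*} (f : X → Y) (γ : DirFam X) : DirFam Y :=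
  ⟨(Set.image f) '' γ.sets, γ.nonempty.image _, by
    rintro A ⟨A', hA', rfl⟩ B ⟨B', hB', rfl⟩
    obtain ⟨E, hE, h⟩ := γ.directed A' hA' B' hB'
    exact ⟨f '' E, ⟨E, hE, rfl⟩, by rw [← Set.image_union]; exact fun y ⟨x, hx, hy⟩ => ⟨x, h hx, hy⟩⟩⟩



section Aux

open unitInterval

lemma sep_points {X : Type*} [TopologicalSpace X] [T2Space X] [CompletelyRegularSpace X]
    {a x : X} (h : a ≠ x) (v w : ℝ) : ∃ g : C(X, ℝ), g a = v ∧ g x = w := by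
  obtain ⟨f, hfc, hfx, hfa⟩ := CompletelyRegularSpace.completely_regular x {a}
    isClosed_singleton (by simp [h.symm])
  refine ⟨⟨fun z => w + (v - w) * (f z : ℝ),
    continuous_const.add (continuous_const.mul (continuous_subtype_val.comp hfc))⟩, ?_, ?_⟩
  · have h1 : f a = 1 := hfa rfl
    simp [h1]
  · simp [hfx]

/-- The set of functions positive at `a`. -/
def Upos {X : Type*} [TopologicalSpace X] (a : X) : Set C(X, ℝ) := {g | 0 < g a}

lemma Upos_open {X : Type*} [TopologicalSpace X] (γ : DirFam X) {A : Set X} (hA : A ∈ γ.sets)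
    {a : X} (ha : a ∈ A) : γ.top.IsOpen (Upos a) := by
  intro g hg
  refine ⟨A, hA, g a, hg, fun h hh => ?_⟩
  have h1 := hh a ha
  have h2 : g a - h a < g a := lt_of_le_of_lt (le_abs_self _) h1
  simp only [Upos, Set.mem_setOf_eq]
  linarith

lemma Upos_not_open_pt {X : Type*} [TopologicalSpace X] [T2Space X] [CompletelyRegularSpace X]
    {a x : X} (h : a ≠ x) : ¬ (Cpt x).IsOpen (Upos a) := by
  intro hop
  have h1 : (ContinuousMap.const X (1:ℝ)) ∈ Upos a := by simp [Upos]
  obtain ⟨A, hA, ε, hε, hsub⟩ := hop _ h1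
  have hA' : A = {x} := hA
  obtain ⟨g, hga, hgx⟩ := sep_points h (-1) 1
  have hmem : g ∈ Vset (ContinuousMap.const X 1) A ε := by
    intro z hz
    rw [hA', Set.mem_singleton_iff] at hz
    subst hz
    simpa [hgx] using hε
  have h2 := hsub hmem
  simp only [Upos, Set.mem_setOf_eq, hga] at h2
  linarith

lemma Cpt_inj {X : Type*} [TopologicalSpace X] [T2Space X] [CompletelyRegularSpace X]
    {x1 x2 : X} (h : Cpt x1 = Cpt x2) : x1 = x2 := by
  by_contra hne
  have hop : (Cpt x1).IsOpen (Upos x1) := Upos_open (ptFam x1) rfl rfl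
  rw [h] at hop
  exact Upos_not_open_pt hne hop

lemma pt_le {X : Type*} [TopologicalSpace X] (γ : DirFam X) {A : Set X} (hA : A ∈ γ.sets)
    {x : X} (hx : x ∈ A) : tle (Cpt x) γ.top := by
  intro U hU f hf
  obtain ⟨B, hB, ε, hε, hsub⟩ := hU f hf
  have hB' : B = {x} := hB
  refine ⟨A, hA, ε, hε, fun g hg => hsub (fun z hz => ?_)⟩
  rw [hB', Set.mem_singleton_iff] at hz
  rw [hz]
  exact hg x hx

lemma empty_top_le {X : Type*} [TopologicalSpace X] (γ : DirFam X)
    (hγ : ∀ A ∈ γ.sets, A = ∅) (t : TopologicalSpace C(X, ℝ)) : tle γ.top t := by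
  intro U hU
  rcases Set.eq_empty_or_nonempty U with rfl | ⟨f, hf⟩
  · simpa using t.isOpen_sUnion ∅ (by simp)
  · obtain ⟨A, hA, ε, hε, hsub⟩ := hU f hf
    have hU2 : U = Set.univ := by
      apply Set.eq_univ_of_univ_subset
      intro g _
      apply hsub
      intro z hz
      rw [hγ A hA] at hz
      exact absurd hz (Set.notMem_empty z)
    rw [hU2]
    exact t.isOpen_univ

end Aux

/-- if `φ : 𝒰_X → 𝒰_Y` is an order-isomorphism and `f` is the `φ`-induced
function (`φ(C_x) = C_{f x}`), then `f` is a bijection and `f⁻¹` is the `φ⁻¹`-induced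
function. -/
theorem stmt11 {X Y : Type*} [TopologicalSpace X] [T2Space X] [CompletelyRegularSpace X]
    [TopologicalSpace Y] [T2Space Y] [CompletelyRegularSpace Y]
    (φ : ↥(UX X) → ↥(UX Y)) (hbij : Function.Bijective φ)
    (hord : ∀ s t : ↥(UX X), tle s.1 t.1 ↔ tle (φ s).1 (φ t).1)
    (f : X → Y) (hf : ∀ x : X, (φ ⟨Cpt x, ptFam x, rfl⟩).1 = Cpt (f x)) :
    Function.Bijective f ∧
      ∀ ψ : ↥(UX Y) → ↥(UX X), Function.LeftInverse ψ φ → Function.RightInverse ψ φ →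
        ∀ g : Y → X, Function.LeftInverse g f → Function.RightInverse g f →
          ∀ y : Y, (ψ ⟨Cpt y, ptFam y, rfl⟩).1 = Cpt (g y) := by
  constructor
  · constructor
    · intro x1 x2 hx
      have e1 : φ ⟨Cpt x1, ptFam x1, rfl⟩ = φ ⟨Cpt x2, ptFam x2, rfl⟩ :=
        Subtype.ext (by rw [hf x1, hf x2, hx])
      exact Cpt_inj (congrArg Subtype.val (hbij.1 e1))
    · intro y
      obtain ⟨s, hs⟩ := hbij.2 ⟨Cpt y, ptFam y, rfl⟩
      obtain ⟨γ, hγ⟩ := s.2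
      by_cases hne : ∃ A ∈ γ.sets, A.Nonempty
      · obtain ⟨A, hA, a, ha⟩ := hne
        refine ⟨a, ?_⟩
        have h1 : tle (Cpt a) s.1 := by rw [hγ]; exact pt_le γ hA ha
        have h2 : tle (φ ⟨Cpt a, ptFam a, rfl⟩).1 (φ s).1 := (hord _ _).1 h1
        rw [hf a, hs] at h2
        by_contra hfa
        have hop : (Cpt (f a)).IsOpen (Upos (f a)) := Upos_open (ptFam (f a)) rfl rfl
        exact Upos_not_open_pt hfa (h2 _ hop)
      · push_neg at hne
        exfalso
        obtain ⟨t, ht⟩ := hbij.2 ⟨(cEmptyFam Y).top, cEmptyFam Y, rfl⟩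
        have h1 : tle s.1 t.1 := by
          rw [hγ]
          exact empty_top_le γ hne t.1
        have h2 := (hord _ _).1 h1
        rw [hs, ht] at h2
        have hop : ((cEmptyFam Y).top).IsOpen (Upos y) :=
          h2 _ (Upos_open (ptFam y) rfl rfl)
        obtain ⟨A, hA, ε, hε, hsub⟩ := hop (ContinuousMap.const Y 1) (by simp [Upos])
        have hA' : A = ∅ := hA
        have hmem : (ContinuousMap.const Y 0) ∈ Vset (ContinuousMap.const Y 1) A ε := by
          intro z hz
          rw [hA'] at hz
          exact absurd hz (Set.notMem_empty z)
        have h3 := hsub hmem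
        simp [Upos] at h3
  · intro ψ hψ1 hψ2 g hg1 hg2 y
    have e1 : (⟨Cpt y, ptFam y, rfl⟩ : ↥(UX Y)) = φ ⟨Cpt (g y), ptFam (g y), rfl⟩ := by
      apply Subtype.ext
      rw [hf (g y), hg2 y]
    rw [e1, hψ1 _]
end

section
/- For any Tychonoff space X, the cellularity of the lattice 𝒰_X, the π-density of 𝒰_X, and the cardinality of X all coincide: c(𝒰_X) = π(𝒰_X) = |X| (all taken as possibly finite cardinals, with the stated family {C_x : x ∈ X} witnessing both an antichain and a dense set). -/
open Set TopologicalSpace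

/-- An antichain in `𝒰_X`: a subset of `𝒰_X⁺` any two distinct members of which meet
in `C_∅`. -/
def isAnti (X : Type*) [TopologicalSpace X] (S : Set (TopologicalSpace C(X, ℝ))) : Prop :=
  S ⊆ UX X ∧ (cEmptyFam X).top ∉ S ∧
    ∀ σ ∈ S, ∀ τ ∈ S, σ ≠ τ →
      ∀ u ∈ UX X, tle u σ → tle u τ → tle u (cEmptyFam X).top

/-- A dense subset of `𝒰_X`: a subset of `𝒰_X⁺` below every member of `𝒰_X⁺`. -/
def isDenseFam (X : Type*) [TopologicalSpace X]
    (S : Set (TopologicalSpace C(X, ℝ))) : Prop :=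
  S ⊆ UX X ∧ (cEmptyFam X).top ∉ S ∧
    ∀ σ ∈ UX X, σ ≠ (cEmptyFam X).top → ∃ τ ∈ S, tle τ σ

section Aux

variable {X : Type*} [TopologicalSpace X]

lemma vset_empty (f : C(X, ℝ)) (ε : ℝ) : Vset f (∅ : Set X) ε = Set.univ := by
  ext g; simp [Vset]

/-- The basic `γ.top`-open set around `0` on `A`. -/
def Uball (A : Set X) : Set C(X, ℝ) :=
  {g | ∃ ε > 0, ∀ w ∈ A, |g w| < 1 / 2 - ε}

lemma zero_mem_Uball (A : Set X) : (0 : C(X, ℝ)) ∈ Uball A :=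
  ⟨1 / 4, by norm_num, fun w _ => by simp; norm_num⟩

lemma one_not_mem_Uball {A : Set X} {a : X} (ha : a ∈ A) :
    (ContinuousMap.const X 1 : C(X, ℝ)) ∉ Uball A := by
  rintro ⟨ε, hε, h⟩
  have := h a ha
  simp only [ContinuousMap.const_apply, abs_one] at this
  linarith

lemma Uball_open (γ : DirFam X) {A : Set X} (hA : A ∈ γ.sets) :
    γ.top.IsOpen (Uball A) := by
  show ∀ f ∈ Uball A, ∃ B ∈ γ.sets, ∃ ε > 0, Vset f B ε ⊆ Uball A
  rintro f ⟨ε, hε, hf⟩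
  obtain ⟨E, hE, hAE⟩ := γ.directed A hA A hA
  have hAE' : A ⊆ E := by rw [Set.union_self] at hAE; exact hAE
  refine ⟨E, hE, ε / 2, by linarith, fun g hg => ⟨ε / 2, by linarith, fun w hw => ?_⟩⟩
  have h1 := hg w (hAE' hw)
  have h2 := hf w hw
  have h3 : |g w| - |f w| ≤ |f w - g w| := by
    rw [abs_sub_comm]; exact abs_sub_abs_le_abs_sub _ _
  linarith

/-- A uniform topology with a nonempty index set is not coarser than `C_∅`. -/
lemma not_tle_cempty (γ : DirFam X) {A : Set X} (hA : A ∈ γ.sets) {a : X} (ha : a ∈ A) :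
    ¬ tle γ.top (cEmptyFam X).top := by
  intro h
  have hopen := h _ (Uball_open γ hA)
  obtain ⟨B, hB, ε, hε, hsub⟩ := hopen 0 (zero_mem_Uball A)
  simp only [cEmptyFam, Set.mem_singleton_iff] at hB
  subst hB
  rw [vset_empty] at hsub
  exact one_not_mem_Uball ha (hsub (Set.mem_univ _))

lemma eq_cempty_of_all_empty (γ : DirFam X) (h : ∀ A ∈ γ.sets, A = ∅) :
    γ.top = (cEmptyFam X).top := by
  refine TopologicalSpace.ext_iff.2 fun U => ?_
  constructor
  · intro hU f hf
    obtain ⟨A, hA, ε, hε, hs⟩ := hU f hf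
    exact ⟨∅, rfl, ε, hε, by rwa [h A hA] at hs⟩
  · intro hU f hf
    obtain ⟨A, hA, ε, hε, hs⟩ := hU f hf
    obtain ⟨B, hB⟩ := γ.nonempty
    simp only [cEmptyFam, Set.mem_singleton_iff] at hA
    exact ⟨B, hB, ε, hε, by rw [h B hB]; rwa [hA] at hs⟩

lemma exists_nonempty_of_ne_cempty (γ : DirFam X) (h : γ.top ≠ (cEmptyFam X).top) :
    ∃ A ∈ γ.sets, A.Nonempty := by
  by_contra hc
  push_neg at hc
  exact h (eq_cempty_of_all_empty γ hc)

lemma tle_cpt (γ : DirFam X) {A : Set X} (hA : A ∈ γ.sets) {x : X} (hx : x ∈ A) :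
    tle (Cpt x) γ.top := by
  intro U hU f hf
  obtain ⟨B, hB, ε, hε, hsub⟩ := hU f hf
  simp only [ptFam, Set.mem_singleton_iff] at hB
  subst hB
  refine ⟨A, hA, ε, hε, fun g hg => hsub fun w hw => ?_⟩
  rw [Set.mem_singleton_iff] at hw; subst hw
  exact hg _ hx

/-- Key: if `γ.top` is coarser than `C_x`, then every member of `γ` is inside `{x}`. -/
lemma subset_of_tle [T1Space X] [CompletelyRegularSpace X]
    {γ : DirFam X} {x : X} (h : tle γ.top (Cpt x)) {A : Set X} (hA : A ∈ γ.sets) :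
    A ⊆ {x} := by
  intro a haA
  rw [Set.mem_singleton_iff]
  by_contra hax
  have hopen := h _ (Uball_open γ hA)
  obtain ⟨B, hB, ε, hε, hsub⟩ := hopen 0 (zero_mem_Uball A)
  simp only [Cpt, ptFam, Set.mem_singleton_iff] at hB
  subst hB
  obtain ⟨f, hfc, hfa, hfx⟩ := CompletelyRegularSpace.completely_regular a {x}
    isClosed_singleton (by simpa using hax)
  set g : C(X, ℝ) := ⟨fun w => 1 - (f w : ℝ), by fun_prop⟩ with hg
  have hgx : g x = 0 := by
    have : f x = 1 := hfx rfl
    simp [hg, this]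
  have hga : g a = 1 := by simp [hg, hfa]
  have hmem : g ∈ Vset 0 {x} ε := by
    intro w hw
    rw [Set.mem_singleton_iff] at hw; subst hw
    simpa [hgx] using hε
  obtain ⟨δ, hδ, hU⟩ := hsub hmem
  have := hU a haA
  rw [hga] at this
  rw [abs_one] at this
  linarith

lemma cpt_ne_cempty (x : X) : Cpt x ≠ (cEmptyFam X).top := by
  intro h
  exact not_tle_cempty (ptFam x) (Set.mem_singleton _) (Set.mem_singleton x)
    (fun U hU => h ▸ hU)

lemma cpt_inj [T1Space X] [CompletelyRegularSpace X] :
    Function.Injective (Cpt (X := X)) := by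
  intro x y hxy
  have h : tle (Cpt x) (Cpt y) := fun U hU => hxy ▸ hU
  have := subset_of_tle (γ := ptFam x) h (Set.mem_singleton _) (Set.mem_singleton x)
  rwa [Set.mem_singleton_iff] at this

end Aux

/-- `c(𝒰_X) = π(𝒰_X) = |X|`, witnessed by the family `{C_x : x ∈ X}`:
every antichain has cardinality at most `|X|`, every dense family has cardinality at
least `|X|`, and `{C_x : x ∈ X}` is an antichain and dense of cardinality `|X|`. -/
theorem stmt14 (X : Type*) [TopologicalSpace X] [T2Space X] [CompletelyRegularSpace X] :
    isAnti X {t | ∃ x : X, t = Cpt x} ∧ isDenseFam X {t | ∃ x : X, t = Cpt x} ∧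
      Cardinal.mk ↥{t : TopologicalSpace C(X, ℝ) | ∃ x : X, t = Cpt x} = Cardinal.mk X ∧
      (∀ S : Set (TopologicalSpace C(X, ℝ)), isAnti X S →
        Cardinal.mk ↥S ≤ Cardinal.mk X) ∧
      (∀ S : Set (TopologicalSpace C(X, ℝ)), isDenseFam X S →
        Cardinal.mk X ≤ Cardinal.mk ↥S) := by
  refine ⟨⟨?_, ?_, ?_⟩, ⟨?_, ?_, ?_⟩, ?_, ?_, ?_⟩
  · rintro t ⟨x, rfl⟩; exact ⟨ptFam x, rfl⟩
  · rintro ⟨x, hx⟩; exact cpt_ne_cempty x hx.symm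
  · rintro σ ⟨x, rfl⟩ τ ⟨y, rfl⟩ hne u ⟨γ, rfl⟩ hux huy
    have hxy : x ≠ y := fun h => hne (by rw [h])
    have hAx : ∀ A ∈ γ.sets, A ⊆ {x} := fun A hA => subset_of_tle hux hA
    have hAy : ∀ A ∈ γ.sets, A ⊆ {y} := fun A hA => subset_of_tle huy hA
    have hAe : ∀ A ∈ γ.sets, A = ∅ := by
      intro A hA
      rw [Set.eq_empty_iff_forall_notMem]
      intro a ha
      have h1 := hAx A hA ha
      have h2 := hAy A hA ha
      rw [Set.mem_singleton_iff] at h1 h2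
      exact hxy (h1 ▸ h2 ▸ rfl)
    intro U hU f hf
    obtain ⟨A, hA, ε, hε, hs⟩ := hU f hf
    exact ⟨∅, rfl, ε, hε, by rwa [hAe A hA] at hs⟩
  · rintro t ⟨x, rfl⟩; exact ⟨ptFam x, rfl⟩
  · rintro ⟨x, hx⟩; exact cpt_ne_cempty x hx.symm
  · rintro σ ⟨γ, rfl⟩ hne
    obtain ⟨A, hA, a, ha⟩ := exists_nonempty_of_ne_cempty γ hne
    exact ⟨Cpt a, ⟨a, rfl⟩, tle_cpt γ hA ha⟩
  · have hset : {t : TopologicalSpace C(X, ℝ) | ∃ x, t = Cpt x} = Set.range Cpt := by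
      ext t; simp [Set.range, eq_comm]
    rw [hset, Cardinal.mk_range_eq _ cpt_inj]
  · rintro S ⟨hsub, hne, hmeet⟩
    have key : ∀ σ : ↥S, ∃ x : X, tle (Cpt x) σ.1 := by
      rintro ⟨σ, hσ⟩
      obtain ⟨γ, rfl⟩ := hsub hσ
      obtain ⟨A, hA, a, ha⟩ := exists_nonempty_of_ne_cempty γ (fun h => hne (h ▸ hσ))
      exact ⟨a, tle_cpt γ hA ha⟩
    choose g hg using key
    refine Cardinal.mk_le_of_injective (f := g) ?_
    intro σ τ hgeq
    by_contra hst
    have hstv : σ.1 ≠ τ.1 := fun h => hst (Subtype.ext h)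
    have := hmeet σ.1 σ.2 τ.1 τ.2 hstv (Cpt (g σ)) ⟨ptFam (g σ), rfl⟩
      (hg σ) (hgeq ▸ hg τ)
    exact not_tle_cempty (ptFam (g σ)) (Set.mem_singleton _) (Set.mem_singleton _) this
  · rintro S ⟨hsub, hne, hdense⟩
    have key : ∀ x : X, ∃ τ : ↥S, tle τ.1 (Cpt x) := by
      intro x
      obtain ⟨τ, hτS, hτ⟩ := hdense (Cpt x) ⟨ptFam x, rfl⟩ (cpt_ne_cempty x)
      exact ⟨⟨τ, hτS⟩, hτ⟩
    choose g hg using key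
    refine Cardinal.mk_le_of_injective (f := g) ?_
    intro x y hgeq
    obtain ⟨γ, hγ⟩ := hsub (g x).2
    have hAx : ∀ A ∈ γ.sets, A ⊆ {x} := fun A hA =>
      subset_of_tle (γ := γ) (hγ ▸ hg x) hA
    have hAy : ∀ A ∈ γ.sets, A ⊆ {y} := fun A hA =>
      subset_of_tle (γ := γ) (hγ ▸ hgeq ▸ hg y) hA
    obtain ⟨A, hA, a, ha⟩ := exists_nonempty_of_ne_cempty γ
      (fun h => hne (by rw [← h, ← hγ]; exact (g x).2))
    have h1 := hAx A hA ha
    have h2 := hAy A hA ha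
    rw [Set.mem_singleton_iff] at h1 h2
    exact h1 ▸ h2 ▸ rfl
end
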